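/- Let Σ = X ∪ Y be an alphabet with X = {x_1,…,x_n} and Y disjoint sets. Let G = Y_0 x_1 Y_1 x_2 Y_2 ⋯ x_n Y_n be a genome where each Y_i for i ∈ [n] is a nonempty string over Y and Y_0 is a possibly empty string over Y. Let c be the CNP with c(x_i) = 1 for all i ∈ [n] and c(y) = 0 for all y ∈ Y. Then d_GCNP(G, c) ≥ n. -/

import Mathlib

/-- An event is either a deletion `del i j` (removing the substring from position `i`
to position `j`, 1-based) or a duplication `dup i j p` (copying the substring from
position `i` to position `j` and inserting the copy after position `p`). -/
inductive GEvent where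
  | del (i j : ℕ)
  | dup (i j p : ℕ)
deriving DecidableEq

/-- Applying an event to a genome (a list of characters). -/
def applyEvent {α : Type*} (G : List α) : GEvent → List α
  | .del i j => G.take (i - 1) ++ G.drop j
  | .dup i j p => G.take p ++ ((G.drop (i - 1)).take (j - i + 1)) ++ G.drop p

/-- Validity of an event on a genome: `del i j` requires `1 ≤ i ≤ j ≤ |G|`;
`dup i j p` requires `1 ≤ i ≤ j ≤ |G|` and `p ∈ {0,…,i−1} ∪ {j,…,|G|}`. -/
def GEvent.Valid {α : Type*} (G : List α) : GEvent → Prop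
  | .del i j => 1 ≤ i ∧ i ≤ j ∧ j ≤ G.length
  | .dup i j p => 1 ≤ i ∧ i ≤ j ∧ j ≤ G.length ∧ (p ≤ i - 1 ∨ (j ≤ p ∧ p ≤ G.length))

/-- `applyEvents G E` is `G⟨E⟩`, the genome obtained by successively applying
the events of `E` to `G`. -/
def applyEvents {α : Type*} (G : List α) : List GEvent → List α
  | [] => G
  | e :: E => applyEvents (applyEvent G e) E

/-- A sequence of events is valid on `G` if each event is valid on the genome
obtained by applying the previous events. -/
def ValidSeq {α : Type*} (G : List α) : List GEvent → Prop
  | [] => True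
  | e :: E => e.Valid G ∧ ValidSeq (applyEvent G e) E

/-- The copy-number profile of a genome: the number of occurrences of each character. -/
def cnp {α : Type*} [DecidableEq α] (G : List α) : α → ℕ := fun s => G.count s

/-- The Genome-to-CNP distance: the minimum length of a valid event sequence turning `G`
into a genome with CNP `c` (`⊤` if there is none). -/
noncomputable def dGCNP {α : Type*} [DecidableEq α] (G : List α) (c : α → ℕ) : ℕ∞ :=
  sInf { k : ℕ∞ | ∃ E : List GEvent,
    ValidSeq G E ∧ (E.length : ℕ∞) = k ∧ cnp (applyEvents G E) = c }

/-!
Call a letter *exposed* in a genome if some occurrence of it is not immediately followed by a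
letter of `Y` (in particular, if it ends the genome). In `G` no `xᵢ` is exposed, since each is
followed by the nonempty block `Yᵢ`; in a genome with profile `c` no letter of `Y` is left, so
every `xᵢ` is exposed. An event only creates new adjacencies at its cut points, and a case
analysis on the letter following the inserted or joined piece shows that at most one letter
becomes newly exposed per event. Hence at least `n` events are needed.

Exposure is taken relative to a continuation `R` (`ExposedBefore Y L R a`: the successor is
read in `L ++ R`) so that the pieces of a rearranged genome can be treated separately.
-/

section Exposure

variable {α : Type*} (Y : Set α)

def ExposedBefore (L R : List α) (a : α) : Prop :=
  ∃ l₁ l₂, L = l₁ ++ a :: l₂ ∧ ∀ b ∈ (l₂ ++ R).head?, b ∉ Y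

def Shielded (L : List α) : Prop :=
  ∀ a, ExposedBefore Y L [] a → a ∈ Y

variable {Y}

theorem exposedBefore_append_iff {L₁ L₂ R : List α} {a : α} :
    ExposedBefore Y (L₁ ++ L₂) R a ↔
      ExposedBefore Y L₁ (L₂ ++ R) a ∨ ExposedBefore Y L₂ R a := by
  constructor
  · rintro ⟨l₁, l₂, hL, hY⟩
    rcases List.append_eq_append_iff.1 hL with ⟨m, rfl, hL₂⟩ | ⟨_ | ⟨b, m⟩, rfl, hm⟩
    · exact Or.inr ⟨m, l₂, hL₂, hY⟩
    · exact Or.inr ⟨[], l₂, by simpa using hm.symm, hY⟩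
    · obtain ⟨rfl, rfl⟩ := List.cons_eq_cons.1 hm
      exact Or.inl ⟨l₁, m, rfl, by simpa using hY⟩
  · rintro (⟨l₁, l₂, rfl, hY⟩ | ⟨l₁, l₂, rfl, hY⟩)
    · exact ⟨l₁, l₂ ++ L₂, by simp, by simpa using hY⟩
    · exact ⟨L₁ ++ l₁, l₂, by simp, hY⟩

theorem exposedBefore_append_append {K L M R : List α} {a : α}
    (h : ExposedBefore Y L (M ++ R) a) : ExposedBefore Y (K ++ L ++ M) R a :=
  exposedBefore_append_iff.2 <| Or.inl <| exposedBefore_append_iff.2 <| Or.inr h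

theorem ExposedBefore.change_continuation {L R : List α} {a : α}
    (h : ExposedBefore Y L R a) (R' : List α) :
    ExposedBefore Y L R' a ∨
      L.getLast? = some a ∧ (∀ b ∈ R.head?, b ∉ Y) ∧ ¬ ∀ b ∈ R'.head?, b ∉ Y := by
  obtain ⟨l₁, _ | ⟨c, l₂⟩, rfl, hY⟩ := h
  · by_cases hR' : ∀ b ∈ R'.head?, b ∉ Y
    · exact Or.inl ⟨l₁, [], rfl, by simpa using hR'⟩
    · exact Or.inr ⟨List.getLast?_concat, by simpa using hY, hR'⟩
  · exact Or.inl ⟨l₁, c :: l₂, rfl, by simpa using hY⟩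

theorem exists_exposedBefore_del (H R : List α) (i j : ℕ) :
    ∃ o : Option α, ∀ a, ExposedBefore Y (applyEvent H (.del i j)) R a →
      ExposedBefore Y H R a ∨ o = some a := by
  refine ⟨(H.take (i - 1)).getLast?, fun a h => ?_⟩
  rcases exposedBefore_append_iff.1 h with hpre | hsuf
  · rcases hpre.change_continuation (H.drop (i - 1) ++ R) with hpre | ⟨hlast, -⟩
    · exact Or.inl (by simpa using exposedBefore_append_append (K := []) hpre)
    · exact Or.inr hlast
  · exact Or.inl (by simpa using exposedBefore_append_append (K := H.take j) (M := []) hsuf)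

theorem exists_exposedBefore_dup (H R : List α) (i j p : ℕ) :
    ∃ o : Option α, ∀ a, ExposedBefore Y (applyEvent H (.dup i j p)) R a →
      ExposedBefore Y H R a ∨ o = some a := by
  set A := H.take p
  set B := H.drop p
  set T := (H.drop (i - 1)).take (j - i + 1)
  have hAB : A ++ B = H := List.take_append_drop _ _
  have hT : H.take (i - 1) ++ T ++ (H.drop (i - 1)).drop (j - i + 1) = H := by
    rw [List.append_assoc, List.take_append_drop, List.take_append_drop]
  have hsplit : ∀ a, ExposedBefore Y (applyEvent H (.dup i j p)) R a →
      ExposedBefore Y A (T ++ (B ++ R)) a ∨ ExposedBefore Y T (B ++ R) a ∨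
        ExposedBefore Y B R a := by
    intro a h
    rwa [applyEvent, exposedBefore_append_iff, exposedBefore_append_iff, or_assoc] at h
  have hB : ∀ a, ExposedBefore Y B R a → ExposedBefore Y H R a := fun a h => by
    simpa [← hAB] using exposedBefore_append_append (K := A) (M := []) h
  have hA : ∀ a, ExposedBefore Y A (B ++ R) a → ExposedBefore Y H R a := fun a h => by
    simpa [← hAB] using exposedBefore_append_append (K := []) h
  have hT' : ∀ a, ExposedBefore Y T ((H.drop (i - 1)).drop (j - i + 1) ++ R) a →
      ExposedBefore Y H R a := fun a h => by
    simpa only [hT] using exposedBefore_append_append (K := H.take (i - 1)) h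
  -- If `B ++ R` starts outside `Y`, the last letter of `A` was already exposed in `H`;
  -- otherwise the inserted copy of `T` is followed by a letter of `Y`.
  by_cases hBR : ∀ b ∈ (B ++ R).head?, b ∉ Y
  · refine ⟨T.getLast?, fun a h => ?_⟩
    rcases hsplit a h with h | h | h
    · rcases h.change_continuation (B ++ R) with h | ⟨-, -, hBR'⟩
      · exact Or.inl (hA a h)
      · exact absurd hBR hBR'
    · rcases h.change_continuation _ with h | ⟨hlast, -⟩
      · exact Or.inl (hT' a h)
      · exact Or.inr hlast
    · exact Or.inl (hB a h)
  · refine ⟨A.getLast?, fun a h => ?_⟩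
    rcases hsplit a h with h | h | h
    · rcases h.change_continuation (B ++ R) with h | ⟨hlast, -⟩
      · exact Or.inl (hA a h)
      · exact Or.inr hlast
    · rcases h.change_continuation _ with h | ⟨-, hBR', -⟩
      · exact Or.inl (hT' a h)
      · exact absurd hBR' hBR
    · exact Or.inl (hB a h)

theorem exists_exposedBefore_applyEvent (H R : List α) (e : GEvent) :
    ∃ o : Option α, ∀ a, ExposedBefore Y (applyEvent H e) R a →
      ExposedBefore Y H R a ∨ o = some a := by
  cases e with
  | del i j => exact exists_exposedBefore_del H R i j
  | dup i j p => exact exists_exposedBefore_dup H R i j p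

theorem card_le_length_of_exposedBefore_applyEvents [DecidableEq α] (E : List GEvent)
    {H : List α} {s : Finset α} (hH : ∀ a ∈ s, ¬ ExposedBefore Y H [] a)
    (hE : ∀ a ∈ s, ExposedBefore Y (applyEvents H E) [] a) : s.card ≤ E.length := by
  induction E generalizing H s with
  | nil =>
    rw [Finset.card_eq_zero.2 (Finset.eq_empty_of_forall_notMem fun a ha => hH a ha (hE a ha))]
    rfl
  | cons e E ih =>
    obtain ⟨o, ho⟩ := exists_exposedBefore_applyEvent H [] e
    have hrest : (s \ o.toFinset).card ≤ E.length := by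
      refine ih (fun a ha h => ?_) (fun a ha => hE a (Finset.sdiff_subset ha))
      obtain ⟨has, hao⟩ := Finset.mem_sdiff.1 ha
      rcases ho a h with h | h
      · exact hH a has h
      · exact hao (Option.mem_toFinset.2 h)
    calc s.card ≤ (s \ o.toFinset).card + o.toFinset.card := Finset.card_le_card_sdiff_add_card
      _ ≤ E.length + 1 := Nat.add_le_add hrest (by cases o <;> simp)

theorem exposedBefore_nil_of_mem {L : List α} {a : α} (hL : ∀ b ∈ L, b ∉ Y) (ha : a ∈ L) :
    ExposedBefore Y L [] a := by
  obtain ⟨l₁, l₂, rfl⟩ := List.append_of_mem ha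
  exact ⟨l₁, l₂, rfl, fun b hb =>
    hL b (by simp [List.mem_of_mem_head? (by simpa using hb)])⟩

theorem shielded_of_forall_mem {L : List α} (hL : ∀ b ∈ L, b ∈ Y) : Shielded Y L := by
  rintro a ⟨l₁, l₂, rfl, -⟩
  exact hL a (by simp)

theorem Shielded.append {L₁ L₂ : List α} (h₁ : Shielded Y L₁) (h₂ : Shielded Y L₂) :
    Shielded Y (L₁ ++ L₂) := by
  intro a h
  rcases exposedBefore_append_iff.1 h with h | h
  · rcases h.change_continuation [] with h | ⟨-, -, hnil⟩
    · exact h₁ a h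
    · simp at hnil
  · exact h₂ a (by simpa using h)

theorem Shielded.cons {L : List α} (hL : Shielded Y L) (hhead : ∃ b ∈ L.head?, b ∈ Y)
    (a : α) : Shielded Y (a :: L) := by
  intro a' h
  rw [← List.singleton_append] at h
  rcases exposedBefore_append_iff.1 h with ⟨l₁, l₂, hl, hY⟩ | h
  · obtain ⟨b, hb, hbY⟩ := hhead
    obtain rfl : l₂ = [] := by
      rcases List.append_eq_singleton_iff.1 hl.symm with ⟨-, hl⟩ | ⟨-, hl⟩
      · exact (List.cons_eq_cons.1 hl).2
      · exact absurd hl (List.cons_ne_nil _ _)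
    exact absurd hbY (hY b (by simpa using hb))
  · exact hL a' h

theorem shielded_flatten {Ls : List (List α)} (h : ∀ L ∈ Ls, Shielded Y L) :
    Shielded Y Ls.flatten := by
  induction Ls with
  | nil => exact shielded_of_forall_mem (by simp)
  | cons L Ls ih =>
    exact (h L (by simp)).append (ih fun L' hL' => h L' (by simp [hL']))

theorem shielded_alternating {n : ℕ} (x : Fin n → α) {Ys : Fin (n + 1) → List α}
    (hYs : ∀ i, ∀ a ∈ Ys i, a ∈ Y) (hYne : ∀ i : Fin (n + 1), i ≠ 0 → Ys i ≠ []) :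
    Shielded Y (Ys 0 ++ (List.finRange n).flatMap fun i => x i :: Ys i.succ) := by
  refine (shielded_of_forall_mem (hYs 0)).append (shielded_flatten ?_)
  simp only [List.mem_map, List.mem_finRange, true_and, forall_exists_index]
  rintro _ i rfl
  obtain ⟨b, L, hL⟩ := List.exists_cons_of_ne_nil (hYne i.succ (Fin.succ_ne_zero i))
  exact (shielded_of_forall_mem (hYs i.succ)).cons
    ⟨b, by simp [hL], hYs i.succ b (by simp [hL])⟩ _

theorem exposedBefore_nil_of_cnp_eq [DecidableEq α] {L : List α} {c : α → ℕ}
    (hL : cnp L = c) (hc0 : ∀ a ∈ Y, c a = 0) {a : α} (ha : c a ≠ 0) :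
    ExposedBefore Y L [] a := by
  subst hL
  refine exposedBefore_nil_of_mem (fun b hb hbY => ?_)
    (List.count_pos_iff.1 (Nat.pos_of_ne_zero ha))
  exact List.count_eq_zero.1 (hc0 b hbY) hb

end Exposure

theorem alternating_lower_bound_general
    {α : Type*} [DecidableEq α] (n : ℕ)
    (x : Fin n → α) (hx : Function.Injective x)
    (Y : Set α)
    (Ys : Fin (n + 1) → List α)
    (hYs : ∀ i, ∀ a ∈ Ys i, a ∈ Y)
    (hYne : ∀ i : Fin (n + 1), i ≠ 0 → Ys i ≠ [])
    (c : α → ℕ)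
    (hc1 : ∀ i, c (x i) = 1)
    (hc0 : ∀ a ∈ Y, c a = 0)
    (G : List α)
    (hG : G = Ys 0 ++ (List.finRange n).flatMap (fun i => x i :: Ys i.succ)) :
    (n : ℕ∞) ≤ dGCNP G c := by
  refine le_sInf ?_
  rintro k ⟨E, -, rfl, hcnp⟩
  have hx0 : ∀ i, c (x i) ≠ 0 := by simp [hc1]
  have hinit : ∀ a ∈ Finset.univ.image x, ¬ ExposedBefore Y G [] a :=
    Finset.forall_mem_image.2 fun i _ h =>
      hx0 i (hc0 _ (shielded_alternating x hYs hYne _ (hG ▸ h)))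
  have hfinal : ∀ a ∈ Finset.univ.image x, ExposedBefore Y (applyEvents G E) [] a :=
    Finset.forall_mem_image.2 fun i _ => exposedBefore_nil_of_cnp_eq hcnp hc0 (hx0 i)
  have hcard := card_le_length_of_exposedBefore_applyEvents E hinit hfinal
  rw [Finset.card_image_of_injective _ hx, Finset.card_univ, Fintype.card_fin] at hcard
  exact_mod_cast hcard

/-- lower bound of Lemma 5 of the paper: let the alphabet `α` be the
disjoint union of `X = {x 0, …, x (n−1)}` (the `x i` being pairwise distinct) and `Y`.
Let `G = Y₀ x₁ Y₁ x₂ Y₂ ⋯ xₙ Yₙ` where each `Yᵢ` (for `i ≥ 1`) is a nonempty string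
over `Y` and `Y₀` is a possibly empty string over `Y`, and let `c` be the CNP with
`c(xᵢ) = 1` for all `i` and `c(y) = 0` for all `y ∈ Y`.  Then `d_GCNP(G, c) ≥ n`. -/
theorem alternating_lower_bound
    {α : Type*} [DecidableEq α] (n : ℕ)
    (x : Fin n → α) (hx : Function.Injective x)
    (Y : Set α)
    (hXY : ∀ i, x i ∉ Y)
    (hall : ∀ a : α, (∃ i, a = x i) ∨ a ∈ Y)
    (Ys : Fin (n + 1) → List α)
    (hYs : ∀ i, ∀ a ∈ Ys i, a ∈ Y)
    (hYne : ∀ i : Fin (n + 1), i ≠ 0 → Ys i ≠ [])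
    (c : α → ℕ)
    (hc1 : ∀ i, c (x i) = 1)
    (hc0 : ∀ a ∈ Y, c a = 0)
    (G : List α)
    (hG : G = Ys 0 ++ (List.finRange n).flatMap (fun i => x i :: Ys i.succ)) :
    (n : ℕ∞) ≤ dGCNP G c :=
  alternating_lower_bound_general n x hx Y Ys hYs hYne c hc1 hc0 G hG
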